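/- arXiv:2409.12764 — 4 statements merged into one kernel-verified Lean document; each statement's English description precedes it below -/
import Mathlib

section
/- Let X be a complex Banach space, let (T(t))_{t≥0} be a strongly continuous semigroup on X that is bounded by a constant M ≥ 1, let Q be a bounded linear operator on X satisfying T(t)Q = QT(t) for all t ≥ 0, and let 1 ≤ p < ∞. Suppose that for every x ∈ X the function t ↦ ‖T(t)Qx‖^p is integrable on (0,∞). Then there exists a constant C > 0 such that ‖T(t)Qx‖ ≤ C t^{−1/p} ‖x‖ for all t > 0 and all x ∈ X; in particular the operator norm of T(t)Q is O(t^{−1/p}) as t → ∞. -/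
/-!
The map `x ↦ ‖T(·) Q x‖_{L^p(0,∞)}` is a seminorm on `X`, finite by hypothesis and lower
semicontinuous by Fatou's lemma. A Banach space is barrelled, so this seminorm is continuous,
i.e. bounded by `C ‖x‖`. On the other hand `‖T(t) y‖ ≤ M ‖T(s) y‖` for `0 < s < t`, so
`t ‖T(t) y‖^p ≤ M^p ∫_0^t ‖T(s) y‖^p ds`, and with `y = Q x` this gives
`t^{1/p} ‖T(t) Q x‖ ≤ M C ‖x‖`.
-/

open MeasureTheory Filter Topology
open scoped ENNReal

section
variable {α X Y : Type*} [MeasurableSpace α] {μ : Measure α} [NormedAddCommGroup Y]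
  {p : ℝ≥0∞}

theorem lowerSemicontinuous_eLpNorm_of_continuous [TopologicalSpace X]
    [FirstCountableTopology X] {F : α → X → Y} (hF : ∀ a, Continuous (F a))
    (hmeas : ∀ x, AEStronglyMeasurable (F · x) μ) :
    LowerSemicontinuous fun x => eLpNorm (F · x) p μ := by
  refine lowerSemicontinuous_iff_isClosed_preimage.mpr fun r => IsSeqClosed.isClosed ?_
  intro u x hu hux
  calc eLpNorm (F · x) p μ ≤ atTop.liminf fun n => eLpNorm (F · (u n)) p μ :=
        Lp.eLpNorm_lim_le_liminf_eLpNorm (fun n => hmeas (u n)) _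
          (.of_forall fun a => ((hF a).tendsto x).comp hux)
    _ ≤ r := liminf_le_of_frequently_le' (.of_forall hu)

theorem mul_measure_rpow_le_eLpNorm {f : α → Y} {s : Set α} (hs : MeasurableSet s)
    (hμs : μ s ≠ 0) (hp : p ≠ 0) {c : ℝ≥0∞} (hc : ∀ a ∈ s, c ≤ ‖f a‖ₑ) :
    c * μ s ^ (1 / p.toReal) ≤ eLpNorm f p μ := by
  have hμ : μ.restrict s ≠ 0 := by simpa [Measure.restrict_eq_zero] using hμs
  calc c * μ s ^ (1 / p.toReal) = eLpNorm (fun _ => c) p (μ.restrict s) := by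
        rw [eLpNorm_const c hp hμ, Measure.restrict_apply_univ, enorm_eq_self]
    _ ≤ eLpNorm f p (μ.restrict s) :=
        eLpNorm_mono_enorm_ae ((ae_restrict_iff' hs).mpr
          (.of_forall fun a ha => by simpa using hc a ha))
    _ ≤ eLpNorm f p μ := eLpNorm_restrict_le _ _ _ _

end

section
variable {𝕜 α X Y : Type*} [NontriviallyNormedField 𝕜] [MeasurableSpace α] {μ : Measure α}
  [NormedAddCommGroup X] [NormedSpace 𝕜 X] [NormedAddCommGroup Y] [NormedSpace 𝕜 Y]
  {p : ℝ≥0∞} [Fact (1 ≤ p)] (S : α → X →L[𝕜] Y)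

noncomputable def lpOrbitSeminorm (hS : ∀ x, MemLp (S · x) p μ) : Seminorm 𝕜 X :=
  Seminorm.of (fun x => (eLpNorm (S · x) p μ).toReal)
    (fun x y => by
      simp only [map_add]
      rw [← ENNReal.toReal_add (hS x).eLpNorm_ne_top (hS y).eLpNorm_ne_top]
      exact ENNReal.toReal_mono
        (ENNReal.add_ne_top.mpr ⟨(hS x).eLpNorm_ne_top, (hS y).eLpNorm_ne_top⟩)
        (eLpNorm_add_le (hS x).1 (hS y).1 Fact.out))
    (fun c x => by
      simp only [map_smul]
      rw [show (fun a => c • S a x) = c • fun a => S a x from rfl, eLpNorm_const_smul,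
        ENNReal.toReal_mul, toReal_enorm])

theorem lowerSemicontinuous_lpOrbitSeminorm (hS : ∀ x, MemLp (S · x) p μ) :
    LowerSemicontinuous (lpOrbitSeminorm S hS) := by
  refine lowerSemicontinuous_iff_isClosed_preimage.mpr fun r => ?_
  rcases lt_or_ge r 0 with hr | hr
  · convert isClosed_empty
    ext x
    simpa using hr.trans_le (apply_nonneg _ x)
  · convert (lowerSemicontinuous_eLpNorm_of_continuous (p := p) (fun a => (S a).continuous)
      (fun x => (hS x).1)).isClosed_preimage (ENNReal.ofReal r)
    ext x
    exact (ENNReal.le_ofReal_iff_toReal_le (hS x).eLpNorm_ne_top hr).symm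

theorem exists_eLpNorm_le_mul_norm [CompleteSpace X] (hS : ∀ x, MemLp (S · x) p μ) :
    ∃ C, 0 < C ∧ ∀ x, eLpNorm (S · x) p μ ≤ ENNReal.ofReal (C * ‖x‖) := by
  obtain ⟨C, hC, hbound⟩ := (lpOrbitSeminorm S hS).bound_of_continuous_normedSpace
    ((lpOrbitSeminorm S hS).continuous_of_lowerSemicontinuous
      (lowerSemicontinuous_lpOrbitSeminorm S hS))
  exact ⟨C, hC, fun x =>
    (ENNReal.le_ofReal_iff_toReal_le (hS x).eLpNorm_ne_top (by positivity)).mpr (hbound x)⟩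

end

section
variable {𝕜 X : Type*} [NontriviallyNormedField 𝕜] [NormedAddCommGroup X] [NormedSpace 𝕜 X]
  (T : ℝ → X →L[𝕜] X) {M : ℝ}

theorem norm_semigroup_apply_le
    (hTadd : ∀ s t : ℝ, 0 ≤ s → 0 ≤ t → T (s + t) = (T s) ∘L (T t))
    (hTbdd : ∀ t : ℝ, 0 ≤ t → ‖T t‖ ≤ M) {s t : ℝ} (hs : 0 ≤ s) (hst : s ≤ t) (y : X) :
    ‖T t y‖ ≤ M * ‖T s y‖ :=
  calc ‖T t y‖ = ‖(T (t - s) ∘L T s) y‖ := by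
        rw [← hTadd _ _ (by linarith) hs, sub_add_cancel]
    _ ≤ M * ‖T s y‖ := (T (t - s)).le_of_opNorm_le (hTbdd _ (by linarith)) _

theorem ofReal_rpow_mul_norm_semigroup_le_eLpNorm
    (hTadd : ∀ s t : ℝ, 0 ≤ s → 0 ≤ t → T (s + t) = (T s) ∘L (T t))
    (hTbdd : ∀ t : ℝ, 0 ≤ t → ‖T t‖ ≤ M) (hM : 0 < M) (y : X) {p : ℝ≥0∞} (hp : p ≠ 0)
    {t : ℝ} (ht : 0 < t) :
    ENNReal.ofReal (t ^ (1 / p.toReal) * ‖T t y‖) ≤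
      ENNReal.ofReal M * eLpNorm (T · y) p (volume.restrict (Set.Ioi 0)) := by
  have hvol : volume.restrict (Set.Ioi 0) (Set.Ioo 0 t) = ENNReal.ofReal t := by
    rw [Measure.restrict_apply measurableSet_Ioo, Set.Ioo_inter_Ioi, max_self, Real.volume_Ioo,
      sub_zero]
  have hlow := mul_measure_rpow_le_eLpNorm (f := (T · y)) measurableSet_Ioo
    (hvol ▸ ENNReal.ofReal_pos.mpr ht).ne' hp (c := ENNReal.ofReal (‖T t y‖ / M)) fun s hs =>
      (ENNReal.ofReal_le_ofReal ((div_le_iff₀' hM).mpr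
        (norm_semigroup_apply_le T hTadd hTbdd hs.1.le hs.2.le y))).trans_eq (ofReal_norm _)
  calc ENNReal.ofReal (t ^ (1 / p.toReal) * ‖T t y‖)
      = ENNReal.ofReal M *
          (ENNReal.ofReal (‖T t y‖ / M) * ENNReal.ofReal t ^ (1 / p.toReal)) := by
        rw [ENNReal.ofReal_rpow_of_nonneg ht.le (by positivity),
          ← ENNReal.ofReal_mul (by positivity), ← ENNReal.ofReal_mul hM.le]
        congr 1
        field_simp
    _ ≤ ENNReal.ofReal M * eLpNorm (T · y) p (volume.restrict (Set.Ioi 0)) := by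
        rw [← hvol]
        exact mul_le_mul_right hlow _

end

theorem stmt2_general {X : Type*} [NormedAddCommGroup X] [NormedSpace ℂ X] [CompleteSpace X]
    (T : ℝ → X →L[ℂ] X) (M : ℝ) (hM : 1 ≤ M)
    (hTadd : ∀ s t : ℝ, 0 ≤ s → 0 ≤ t → T (s + t) = (T s) ∘L (T t))
    (hTcont : ∀ x : X, ContinuousOn (fun t : ℝ => T t x) (Set.Ici (0 : ℝ)))
    (hTbdd : ∀ t : ℝ, 0 ≤ t → ‖T t‖ ≤ M)
    (Q : X →L[ℂ] X)
    (p : ℝ) (hp : 1 ≤ p)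
    (hint : ∀ x : X, IntegrableOn (fun t : ℝ => ‖T t (Q x)‖ ^ p) (Set.Ioi (0 : ℝ))) :
    ∃ C : ℝ, 0 < C ∧ ∀ t : ℝ, 0 < t → ∀ x : X,
      ‖T t (Q x)‖ ≤ C * t ^ (-(1 / p)) * ‖x‖ := by
  have hp0 : 0 < p := by linarith
  have hM0 : 0 < M := by linarith
  have : Fact (1 ≤ ENNReal.ofReal p) := ⟨ENNReal.one_le_ofReal.mpr hp⟩
  have hmem (x : X) : MemLp (fun s => (T s ∘L Q) x) (ENNReal.ofReal p)
      (volume.restrict (Set.Ioi 0)) :=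
    (integrable_norm_rpow_iff
      (((hTcont (Q x)).mono Set.Ioi_subset_Ici_self).aestronglyMeasurable measurableSet_Ioi)
      (by simpa using hp0) ENNReal.ofReal_ne_top).mp
      (by rw [ENNReal.toReal_ofReal hp0.le]; exact hint x)
  obtain ⟨C, hC, hbound⟩ := exists_eLpNorm_le_mul_norm _ hmem
  refine ⟨M * C, by positivity, fun t ht x => ?_⟩
  have key := (ofReal_rpow_mul_norm_semigroup_le_eLpNorm T hTadd hTbdd hM0 (Q x)
    (p := ENNReal.ofReal p) (by simpa using hp0) ht).trans (mul_le_mul_right (hbound x) _)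
  rw [← ENNReal.ofReal_mul hM0.le, ENNReal.ofReal_le_ofReal_iff (by positivity),
    ENNReal.toReal_ofReal hp0.le] at key
  have htp : 0 < t ^ (1 / p) := by positivity
  calc ‖T t (Q x)‖ = (t ^ (1 / p))⁻¹ * (t ^ (1 / p) * ‖T t (Q x)‖) := by field_simp
    _ ≤ (t ^ (1 / p))⁻¹ * (M * (C * ‖x‖)) := by gcongr
    _ = M * C * t ^ (-(1 / p)) * ‖x‖ := by rw [Real.rpow_neg ht.le]; ring

/-- `‖T(t)Q‖ = O(t^{-1/p})` from `p`-integrability of orbits through `Q`. -/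
theorem stmt2 {X : Type*} [NormedAddCommGroup X] [NormedSpace ℂ X] [CompleteSpace X]
    (T : ℝ → X →L[ℂ] X) (M : ℝ) (hM : 1 ≤ M)
    (hT0 : T 0 = 1)
    (hTadd : ∀ s t : ℝ, 0 ≤ s → 0 ≤ t → T (s + t) = (T s) ∘L (T t))
    (hTcont : ∀ x : X, ContinuousOn (fun t : ℝ => T t x) (Set.Ici (0 : ℝ)))
    (hTbdd : ∀ t : ℝ, 0 ≤ t → ‖T t‖ ≤ M)
    (Q : X →L[ℂ] X)
    (hQ : ∀ t : ℝ, 0 ≤ t → (T t) ∘L Q = Q ∘L (T t))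
    (p : ℝ) (hp : 1 ≤ p)
    (hint : ∀ x : X, IntegrableOn (fun t : ℝ => ‖T t (Q x)‖ ^ p) (Set.Ioi (0 : ℝ))) :
    ∃ C : ℝ, 0 < C ∧ ∀ t : ℝ, 0 < t → ∀ x : X,
      ‖T t (Q x)‖ ≤ C * t ^ (-(1 / p)) * ‖x‖ :=
  stmt2_general T M hM hTadd hTcont hTbdd Q p hp hint
end

section
/- Let X and Y be complex Banach spaces, let (T(t))_{t≥0} be a strongly continuous semigroup on X that is bounded by a constant M ≥ 1, let C : X → Y and Q : X → X be bounded linear operators with T(t)Q = QT(t) for all t ≥ 0, and let 1 ≤ p < ∞. Suppose there exist constants K, τ > 0 such that ‖Qx‖^p ≤ K ∫₀^τ ‖C T(t)x‖^p dt for all x ∈ X, and that ∫₀^∞ ‖C T(t)x‖^p dt ≤ ‖x‖^p for all x ∈ X. Then ∫₀^∞ ‖T(t)Qx‖^p dt ≤ K τ M^p ‖x‖^p for all x ∈ X. -/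
open MeasureTheory Filter Topology

/-- window-summation argument: observability plus an integrated
observation bound yield `p`-integrability of orbits through `Q`. -/
theorem stmt10 {X Y : Type*} [NormedAddCommGroup X] [NormedSpace ℂ X] [CompleteSpace X]
    [NormedAddCommGroup Y] [NormedSpace ℂ Y] [CompleteSpace Y]
    (T : ℝ → X →L[ℂ] X) (M : ℝ) (hM : 1 ≤ M)
    (hT0 : T 0 = 1)
    (hTadd : ∀ s t : ℝ, 0 ≤ s → 0 ≤ t → T (s + t) = (T s) ∘L (T t))
    (hTcont : ∀ x : X, ContinuousOn (fun t : ℝ => T t x) (Set.Ici (0 : ℝ)))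
    (hTbdd : ∀ t : ℝ, 0 ≤ t → ‖T t‖ ≤ M)
    (C : X →L[ℂ] Y) (Q : X →L[ℂ] X)
    (hQ : ∀ t : ℝ, 0 ≤ t → (T t) ∘L Q = Q ∘L (T t))
    (p : ℝ) (hp : 1 ≤ p)
    (K τ : ℝ) (hK : 0 < K) (hτ : 0 < τ)
    (hobs : ∀ x : X, ‖Q x‖ ^ p ≤ K * ∫ t in (0 : ℝ)..τ, ‖C (T t x)‖ ^ p)
    (hintC : ∀ x : X,
      ∫⁻ t in Set.Ioi (0 : ℝ), ENNReal.ofReal (‖C (T t x)‖ ^ p)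
        ≤ ENNReal.ofReal (‖x‖ ^ p)) :
    ∀ x : X,
      ∫⁻ t in Set.Ioi (0 : ℝ), ENNReal.ofReal (‖T t (Q x)‖ ^ p)
        ≤ ENNReal.ofReal (K * τ * M ^ p * ‖x‖ ^ p) := by
  intro x
  have hM0 : (0:ℝ) ≤ M := le_trans zero_le_one hM
  have hMp0 : (0:ℝ) ≤ M ^ p := Real.rpow_nonneg hM0 p
  have hp0 : (0:ℝ) ≤ p := le_trans zero_le_one hp
  set φ : ℝ → ℝ := fun u => ‖C (T u x)‖ ^ p with hφdef
  have hφnn : ∀ u, 0 ≤ φ u := fun u => Real.rpow_nonneg (norm_nonneg _) p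
  have hφcont : ContinuousOn φ (Set.Ici 0) := by
    apply ContinuousOn.rpow_const
    · exact ((continuous_norm.comp C.continuous).comp_continuousOn (hTcont x))
    · intro t _; right; exact hp0
  set S : ℕ → Set ℝ := fun n => Set.Ioc ((n:ℝ) * τ) (((n:ℝ) + 1) * τ) with hSdef
  have hSmeas : ∀ n, MeasurableSet (S n) := fun n => measurableSet_Ioc
  have hSdisj : Pairwise (Function.onFun Disjoint S) := by
    intro m n hmn
    rcases hmn.lt_or_gt with h | h
    · apply Set.disjoint_left.2
      intro t htm htn
      have h1 : ((m:ℝ) + 1) ≤ (n:ℝ) := by exact_mod_cast h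
      have := htm.2
      have := htn.1
      nlinarith [hτ.le]
    · apply Set.disjoint_left.2
      intro t htm htn
      have h1 : ((n:ℝ) + 1) ≤ (m:ℝ) := by exact_mod_cast h
      have := htm.1
      have := htn.2
      nlinarith [hτ.le]
  have hUnion : Set.Ioi (0:ℝ) = ⋃ n, S n := by
    ext t
    simp only [Set.mem_Ioi, Set.mem_iUnion, hSdef, Set.mem_Ioc]
    constructor
    · intro ht
      have hpos : 0 < t / τ := div_pos ht hτ
      set m := ⌈t / τ⌉₊ with hm
      have hm1 : 1 ≤ m := Nat.one_le_iff_ne_zero.2 (by positivity)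
      refine ⟨m - 1, ?_, ?_⟩
      · have hlt : ((m - 1 : ℕ) : ℝ) < t / τ := by
          by_contra hc
          push_neg at hc
          have := Nat.ceil_le.2 hc
          omega
        calc ((m - 1 : ℕ) : ℝ) * τ < (t / τ) * τ := by
              exact mul_lt_mul_of_pos_right hlt hτ
          _ = t := by field_simp
      · have hle : t / τ ≤ (m : ℝ) := Nat.le_ceil _
        have hcast : ((m - 1 : ℕ) : ℝ) + 1 = (m : ℝ) := by
          have h1 : ((m - 1 : ℕ) : ℝ) = (m:ℝ) - 1 := by
            have := Nat.cast_sub (R := ℝ) hm1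
            simpa using this
          rw [h1]; ring
        rw [hcast]
        calc t = (t / τ) * τ := by field_simp
          _ ≤ (m : ℝ) * τ := mul_le_mul_of_nonneg_right hle hτ.le
    · rintro ⟨n, hn1, _⟩
      have : (0:ℝ) ≤ (n:ℝ) * τ := by positivity
      linarith
  -- key pointwise bound on S n
  have key : ∀ n : ℕ, ∀ t ∈ S n,
      ‖T t (Q x)‖ ^ p ≤ M ^ p * (K * ∫ u in ((n:ℝ)*τ)..(((n:ℝ)+1)*τ), φ u) := by
    intro n t ht
    have hnτ : (0:ℝ) ≤ (n:ℝ) * τ := by positivity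
    have ht0 : (0:ℝ) ≤ t - (n:ℝ) * τ := by have := ht.1; linarith
    have e1 : T t (Q x) = T (t - (n:ℝ)*τ) (Q (T ((n:ℝ)*τ) x)) := by
      have h := hTadd (t - (n:ℝ)*τ) ((n:ℝ)*τ) ht0 hnτ
      rw [show (t - (n:ℝ)*τ) + (n:ℝ)*τ = t by ring] at h
      have hcomm := ContinuousLinearMap.ext_iff.1 (hQ ((n:ℝ)*τ) hnτ) x
      simp only [ContinuousLinearMap.comp_apply] at hcomm
      rw [h]
      simp [hcomm]
    have e2 : ‖T t (Q x)‖ ≤ M * ‖Q (T ((n:ℝ)*τ) x)‖ := by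
      rw [e1]
      calc ‖T (t - (n:ℝ)*τ) (Q (T ((n:ℝ)*τ) x))‖
          ≤ ‖T (t - (n:ℝ)*τ)‖ * ‖Q (T ((n:ℝ)*τ) x)‖ := (T _).le_opNorm _
        _ ≤ M * ‖Q (T ((n:ℝ)*τ) x)‖ :=
            mul_le_mul_of_nonneg_right (hTbdd _ ht0) (norm_nonneg _)
    have e3 : ‖T t (Q x)‖ ^ p ≤ M ^ p * ‖Q (T ((n:ℝ)*τ) x)‖ ^ p := by
      calc ‖T t (Q x)‖ ^ p ≤ (M * ‖Q (T ((n:ℝ)*τ) x)‖) ^ p :=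
            Real.rpow_le_rpow (norm_nonneg _) e2 hp0
        _ = M ^ p * ‖Q (T ((n:ℝ)*τ) x)‖ ^ p :=
            Real.mul_rpow hM0 (norm_nonneg _)
    have e4 : ∫ s in (0:ℝ)..τ, ‖C (T s (T ((n:ℝ)*τ) x))‖ ^ p
        = ∫ u in ((n:ℝ)*τ)..(((n:ℝ)+1)*τ), φ u := by
      have hcongr : Set.EqOn (fun s => ‖C (T s (T ((n:ℝ)*τ) x))‖ ^ p)
          (fun s => φ (s + (n:ℝ)*τ)) (Set.uIcc 0 τ) := by
        intro s hs
        rw [Set.uIcc_of_le hτ.le] at hs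
        have h := hTadd s ((n:ℝ)*τ) hs.1 hnτ
        simp only [hφdef]
        rw [h]
        rfl
      rw [intervalIntegral.integral_congr hcongr,
        intervalIntegral.integral_comp_add_right φ ((n:ℝ)*τ)]
      congr 1 <;> ring
    have e5 := hobs (T ((n:ℝ)*τ) x)
    rw [e4] at e5
    calc ‖T t (Q x)‖ ^ p ≤ M ^ p * ‖Q (T ((n:ℝ)*τ) x)‖ ^ p := e3
      _ ≤ M ^ p * (K * ∫ u in ((n:ℝ)*τ)..(((n:ℝ)+1)*τ), φ u) :=
          mul_le_mul_of_nonneg_left e5 hMp0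
  -- per-window integral bound
  have hIn : ∀ n : ℕ, ∫⁻ t in S n, ENNReal.ofReal (‖T t (Q x)‖ ^ p)
      ≤ ENNReal.ofReal τ * (ENNReal.ofReal (M ^ p * K) *
        ∫⁻ u in S n, ENNReal.ofReal (φ u)) := by
    intro n
    have hnτ : (0:ℝ) ≤ (n:ℝ) * τ := by positivity
    have hab : (n:ℝ)*τ ≤ ((n:ℝ)+1)*τ := by nlinarith
    have hφint : IntegrableOn φ (S n) volume := by
      have hsub : Set.Icc ((n:ℝ)*τ) (((n:ℝ)+1)*τ) ⊆ Set.Ici 0 :=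
        fun u hu => le_trans hnτ hu.1
      exact ((hφcont.mono hsub).integrableOn_Icc).mono_set Set.Ioc_subset_Icc_self
    have hIle : ENNReal.ofReal (∫ u in ((n:ℝ)*τ)..(((n:ℝ)+1)*τ), φ u)
        ≤ ∫⁻ u in S n, ENNReal.ofReal (φ u) := by
      rw [intervalIntegral.integral_of_le hab]
      exact (ofReal_integral_eq_lintegral_ofReal hφint
        (Filter.Eventually.of_forall fun u => hφnn u)).le
    calc ∫⁻ t in S n, ENNReal.ofReal (‖T t (Q x)‖ ^ p)
        ≤ ∫⁻ _ in S n, ENNReal.ofReal (M ^ p * (K * ∫ u in ((n:ℝ)*τ)..(((n:ℝ)+1)*τ), φ u)) := by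
          apply setLIntegral_mono measurable_const
          intro t ht
          exact ENNReal.ofReal_le_ofReal (key n t ht)
      _ = ENNReal.ofReal (M ^ p * (K * ∫ u in ((n:ℝ)*τ)..(((n:ℝ)+1)*τ), φ u)) * volume (S n) := setLIntegral_const _ _
      _ = ENNReal.ofReal (M ^ p * (K * ∫ u in ((n:ℝ)*τ)..(((n:ℝ)+1)*τ), φ u)) * ENNReal.ofReal τ := by
          rw [hSdef]
          simp only [Real.volume_Ioc]
          congr 1
          ring
      _ ≤ (ENNReal.ofReal (M ^ p * K) *
            ENNReal.ofReal (∫ u in ((n:ℝ)*τ)..(((n:ℝ)+1)*τ), φ u)) * ENNReal.ofReal τ := by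
          gcongr
          rw [← ENNReal.ofReal_mul (by positivity)]
          apply ENNReal.ofReal_le_ofReal
          rw [mul_assoc]
      _ ≤ (ENNReal.ofReal (M ^ p * K) * ∫⁻ u in S n, ENNReal.ofReal (φ u)) * ENNReal.ofReal τ := by
          gcongr
      _ = ENNReal.ofReal τ * (ENNReal.ofReal (M ^ p * K) * ∫⁻ u in S n, ENNReal.ofReal (φ u)) := by
          ring
  calc ∫⁻ t in Set.Ioi (0:ℝ), ENNReal.ofReal (‖T t (Q x)‖ ^ p)
      = ∑' n, ∫⁻ t in S n, ENNReal.ofReal (‖T t (Q x)‖ ^ p) := by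
        rw [hUnion]; exact lintegral_iUnion hSmeas hSdisj _
    _ ≤ ∑' n, (ENNReal.ofReal τ * (ENNReal.ofReal (M ^ p * K) *
          ∫⁻ u in S n, ENNReal.ofReal (φ u))) := ENNReal.tsum_le_tsum hIn
    _ = ENNReal.ofReal τ * (ENNReal.ofReal (M ^ p * K) *
          ∑' n, ∫⁻ u in S n, ENNReal.ofReal (φ u)) := by
        rw [ENNReal.tsum_mul_left, ENNReal.tsum_mul_left]
    _ = ENNReal.ofReal τ * (ENNReal.ofReal (M ^ p * K) *
          ∫⁻ u in Set.Ioi (0:ℝ), ENNReal.ofReal (φ u)) := by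
        rw [hUnion, lintegral_iUnion hSmeas hSdisj]
    _ ≤ ENNReal.ofReal τ * (ENNReal.ofReal (M ^ p * K) * ENNReal.ofReal (‖x‖ ^ p)) := by
        gcongr
        exact hintC x
    _ = ENNReal.ofReal (K * τ * M ^ p * ‖x‖ ^ p) := by
        rw [← ENNReal.ofReal_mul (by positivity), ← ENNReal.ofReal_mul hτ.le]
        congr 1
        ring
end

section
/- Let X and Y be complex Banach spaces, let (T(t))_{t≥0} be a strongly continuous semigroup on X that is bounded by a constant M ≥ 1, let C : X → Y and Q : X → X be bounded linear operators with T(t)Q = QT(t) for all t ≥ 0, and let 1 ≤ p < ∞. Suppose there exist constants K, τ > 0 such that ‖Qx‖^p ≤ K ∫₀^τ ‖C T(t)x‖^p dt for all x ∈ X, and that ∫₀^∞ ‖C T(t)x‖^p dt ≤ ‖x‖^p for all x ∈ X. Then ‖T(t)Qx‖ ≤ (Kτ)^{1/p} M² t^{−1/p} ‖x‖ for all t > 0 and all x ∈ X; in particular the operator norm of T(t)Q is O(t^{−1/p}) as t → ∞. -/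
/-!
The integrated bound says that the observation energy `∫ ‖C T(r) x‖^p` over `(0, ∞)` is at most
`‖x‖^p`. Among the `⌊t/τ⌋ + 1` windows `(kτ, kτ + τ]` with `kτ ≤ t` one therefore carries at most
the fraction `τ/t` of it, and observability applied to `T(s) x`, `s = kτ`, gives
`‖Q T(s) x‖^p ≤ Kτ ‖x‖^p / t`. Finally `T(t) Q x = T(t - s) Q T(s) x` costs one factor `M`.
-/

open MeasureTheory Filter Topology

open Finset Set ENNReal

theorem Real.le_rpow_one_div_mul_of_rpow_le {a b c p : ℝ} (ha : 0 ≤ a) (hb : 0 ≤ b) (hc : 0 ≤ c)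
    (hp : 0 < p) (h : a ^ p ≤ c * b ^ p) : a ≤ c ^ (1 / p) * b := by
  rwa [← Real.rpow_le_rpow_iff ha (by positivity) hp, Real.mul_rpow (by positivity) hb,
    ← Real.rpow_mul hc, one_div_mul_cancel hp.ne', Real.rpow_one]

theorem ofReal_integral_le_lintegral_ofReal {α : Type*} [MeasurableSpace α] {μ : Measure α}
    {f : α → ℝ} (hf : ∀ a, 0 ≤ f a) :
    ENNReal.ofReal (∫ a, f a ∂μ) ≤ ∫⁻ a, ENNReal.ofReal (f a) ∂μ :=
  calc ENNReal.ofReal (∫ a, f a ∂μ) ≤ ‖∫ a, f a ∂μ‖ₑ := by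
        rw [Real.enorm_eq_ofReal_abs]
        exact ENNReal.ofReal_le_ofReal (le_abs_self _)
    _ ≤ ∫⁻ a, ‖f a‖ₑ ∂μ := enorm_integral_le_lintegral_enorm f
    _ = ∫⁻ a, ENNReal.ofReal (f a) ∂μ := by simp only [Real.enorm_of_nonneg (hf _)]

theorem sum_setLIntegral_Ioc_adjacent {α : Type*} [LinearOrder α] [TopologicalSpace α]
    [OrderClosedTopology α] [MeasurableSpace α] [OpensMeasurableSpace α] {μ : Measure α}
    {a : ℕ → α} (ha : Monotone a) (f : α → ℝ≥0∞) (n : ℕ) :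
    ∑ k ∈ range n, ∫⁻ x in Ioc (a k) (a (k + 1)), f x ∂μ = ∫⁻ x in Ioc (a 0) (a n), f x ∂μ := by
  induction n with
  | zero => simp
  | succ n ih =>
    rw [sum_range_succ, ih, ← lintegral_union measurableSet_Ioc (Ioc_disjoint_Ioc_of_le le_rfl),
      Ioc_union_Ioc_eq_Ioc (ha n.zero_le) (ha n.le_succ)]

theorem ENNReal.exists_le_div_of_sum_le {n : ℕ} (hn : n ≠ 0) {a : ℕ → ℝ≥0∞} {b : ℝ≥0∞}
    (h : ∑ k ∈ range n, a k ≤ b) : ∃ k < n, a k ≤ b / n := by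
  obtain ⟨k, hk, hak⟩ := ENNReal.exists_le_of_sum_le (nonempty_range_iff.mpr hn)
    (f := a) (g := fun _ => b / n) (by
      rwa [sum_const, card_range, nsmul_eq_mul,
        ENNReal.mul_div_cancel (Nat.cast_ne_zero.mpr hn) (natCast_ne_top n)])
  exact ⟨k, mem_range.mp hk, hak⟩

theorem exists_setLIntegral_Ioc_le (f : ℝ → ℝ≥0∞) {τ t : ℝ} (hτ : 0 < τ) (ht : 0 < t) :
    ∃ s ∈ Icc 0 t, ∫⁻ r in Ioc s (s + τ), f r ≤ ENNReal.ofReal (τ / t) * ∫⁻ r in Ioi 0, f r := by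
  set n := ⌊t / τ⌋₊ + 1
  have hmono : Monotone fun k : ℕ => (k : ℝ) * τ := fun i j hij =>
    mul_le_mul_of_nonneg_right (Nat.cast_le.mpr hij) hτ.le
  have hsum : ∑ k ∈ range n, ∫⁻ r in Ioc (k * τ) ((k + 1 : ℕ) * τ), f r
      ≤ ∫⁻ r in Ioi 0, f r := by
    rw [sum_setLIntegral_Ioc_adjacent hmono f n, Nat.cast_zero, zero_mul]
    exact lintegral_mono_set Ioc_subset_Ioi_self
  obtain ⟨k, hk, hwin⟩ := ENNReal.exists_le_div_of_sum_le (Nat.succ_ne_zero _) hsum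
  have hkt : (k : ℝ) ≤ t / τ :=
    (Nat.le_floor_iff (by positivity)).mp (Nat.lt_succ_iff.mp hk)
  have hn_inv : (n : ℝ≥0∞)⁻¹ ≤ ENNReal.ofReal (τ / t) := by
    rw [← inv_div, ENNReal.ofReal_inv_of_pos (by positivity), ENNReal.inv_le_inv,
      ← ENNReal.ofReal_natCast]
    exact ENNReal.ofReal_le_ofReal (by exact_mod_cast (Nat.lt_floor_add_one (t / τ)).le)
  refine ⟨k * τ, ⟨by positivity, (le_div_iff₀ hτ).mp hkt⟩, ?_⟩
  calc ∫⁻ r in Ioc (k * τ) (k * τ + τ), f r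
      = ∫⁻ r in Ioc (k * τ) ((k + 1 : ℕ) * τ), f r := by push_cast; ring_nf
    _ ≤ (∫⁻ r in Ioi 0, f r) / n := hwin
    _ ≤ ENNReal.ofReal (τ / t) * ∫⁻ r in Ioi 0, f r := by
      rw [div_eq_mul_inv, mul_comm]
      gcongr

section Semigroup

variable {𝕜 X Y : Type*} [NontriviallyNormedField 𝕜] [NormedAddCommGroup X] [NormedSpace 𝕜 X]
  [NormedAddCommGroup Y] [NormedSpace 𝕜 Y] {T : ℝ → X →L[𝕜] X}

theorem norm_apply_le_mul_norm_comm_apply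
    (hTadd : ∀ s t : ℝ, 0 ≤ s → 0 ≤ t → T (s + t) = T s ∘L T t)
    {M : ℝ} (hTbdd : ∀ t : ℝ, 0 ≤ t → ‖T t‖ ≤ M) {Q : X →L[𝕜] X}
    (hQ : ∀ t : ℝ, 0 ≤ t → T t ∘L Q = Q ∘L T t) {s t : ℝ} (hs : 0 ≤ s) (hst : s ≤ t) (x : X) :
    ‖T t (Q x)‖ ≤ M * ‖Q (T s x)‖ := by
  have hts : 0 ≤ t - s := sub_nonneg.mpr hst
  have hsplit : T t = T (t - s) ∘L T s := by rw [← hTadd _ _ hts hs, sub_add_cancel]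
  calc ‖T t (Q x)‖ = ‖T (t - s) ((T s ∘L Q) x)‖ := by rw [hsplit]; rfl
    _ = ‖T (t - s) (Q (T s x))‖ := by rw [hQ s hs]; rfl
    _ ≤ M * ‖Q (T s x)‖ := (T (t - s)).le_of_opNorm_le (hTbdd _ hts) _

theorem ofReal_norm_rpow_le_setLIntegral_shift
    (hTadd : ∀ s t : ℝ, 0 ≤ s → 0 ≤ t → T (s + t) = T s ∘L T t)
    {C : X →L[𝕜] Y} {Q : X →L[𝕜] X} {p K τ : ℝ} (hK : 0 ≤ K) (hτ : 0 ≤ τ)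
    (hobs : ∀ x : X, ‖Q x‖ ^ p ≤ K * ∫ t in (0 : ℝ)..τ, ‖C (T t x)‖ ^ p)
    {s : ℝ} (hs : 0 ≤ s) (x : X) :
    ENNReal.ofReal (‖Q (T s x)‖ ^ p)
      ≤ ENNReal.ofReal K * ∫⁻ r in Ioc s (s + τ), ENNReal.ofReal (‖C (T r x)‖ ^ p) := by
  have hshift : ∫ r in (0 : ℝ)..τ, ‖C (T r (T s x))‖ ^ p = ∫ r in s..s + τ, ‖C (T r x)‖ ^ p := by
    calc ∫ r in (0 : ℝ)..τ, ‖C (T r (T s x))‖ ^ p = ∫ r in (0 : ℝ)..τ, ‖C (T (r + s) x)‖ ^ p :=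
          intervalIntegral.integral_congr fun r hr => by
            rw [uIcc_of_le hτ] at hr
            rw [hTadd r s hr.1 hs, ContinuousLinearMap.comp_apply]
      _ = ∫ r in s..s + τ, ‖C (T r x)‖ ^ p := by
          rw [intervalIntegral.integral_comp_add_right (fun r => ‖C (T r x)‖ ^ p), zero_add,
            add_comm τ]
  calc ENNReal.ofReal (‖Q (T s x)‖ ^ p)
      ≤ ENNReal.ofReal K * ENNReal.ofReal (∫ r in Ioc s (s + τ), ‖C (T r x)‖ ^ p) := by
        rw [← ENNReal.ofReal_mul hK, ← intervalIntegral.integral_of_le (by linarith), ← hshift]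
        exact ENNReal.ofReal_le_ofReal (hobs _)
    _ ≤ ENNReal.ofReal K * ∫⁻ r in Ioc s (s + τ), ENNReal.ofReal (‖C (T r x)‖ ^ p) := by
        gcongr
        exact ofReal_integral_le_lintegral_ofReal fun r => by positivity

end Semigroup

theorem stmt11_general {X Y : Type*} [NormedAddCommGroup X] [NormedSpace ℂ X]
    [NormedAddCommGroup Y] [NormedSpace ℂ Y]
    (T : ℝ → X →L[ℂ] X) (M : ℝ) (hM : 1 ≤ M)
    (hTadd : ∀ s t : ℝ, 0 ≤ s → 0 ≤ t → T (s + t) = (T s) ∘L (T t))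
    (hTbdd : ∀ t : ℝ, 0 ≤ t → ‖T t‖ ≤ M)
    (C : X →L[ℂ] Y) (Q : X →L[ℂ] X)
    (hQ : ∀ t : ℝ, 0 ≤ t → (T t) ∘L Q = Q ∘L (T t))
    (p : ℝ) (hp : 1 ≤ p)
    (K τ : ℝ) (hK : 0 < K) (hτ : 0 < τ)
    (hobs : ∀ x : X, ‖Q x‖ ^ p ≤ K * ∫ t in (0 : ℝ)..τ, ‖C (T t x)‖ ^ p)
    (hintC : ∀ x : X,
      ∫⁻ t in Set.Ioi (0 : ℝ), ENNReal.ofReal (‖C (T t x)‖ ^ p)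
        ≤ ENNReal.ofReal (‖x‖ ^ p)) :
    ∀ t : ℝ, 0 < t → ∀ x : X,
      ‖T t (Q x)‖ ≤ (K * τ) ^ (1 / p) * M ^ 2 * t ^ (-(1 / p)) * ‖x‖ := by
  intro t ht x
  obtain ⟨s, ⟨hs, hst⟩, hwin⟩ :=
    exists_setLIntegral_Ioc_le (fun r => ENNReal.ofReal (‖C (T r x)‖ ^ p)) hτ ht
  have hQs : ‖Q (T s x)‖ ^ p ≤ K * τ / t * ‖x‖ ^ p := by
    rw [← ENNReal.ofReal_le_ofReal_iff (by positivity)]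
    calc ENNReal.ofReal (‖Q (T s x)‖ ^ p)
        ≤ ENNReal.ofReal K * ∫⁻ r in Ioc s (s + τ), ENNReal.ofReal (‖C (T r x)‖ ^ p) :=
          ofReal_norm_rpow_le_setLIntegral_shift hTadd hK.le hτ.le hobs hs x
      _ ≤ ENNReal.ofReal K * (ENNReal.ofReal (τ / t) * ENNReal.ofReal (‖x‖ ^ p)) := by
          gcongr
          exact hwin.trans (by gcongr; exact hintC x)
      _ = ENNReal.ofReal (K * τ / t * ‖x‖ ^ p) := by
          rw [← ENNReal.ofReal_mul (by positivity), ← ENNReal.ofReal_mul hK.le, mul_div_assoc,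
            mul_assoc]
  calc ‖T t (Q x)‖ ≤ M * ‖Q (T s x)‖ :=
        norm_apply_le_mul_norm_comm_apply hTadd hTbdd hQ hs hst x
    _ ≤ M * ((K * τ / t) ^ (1 / p) * ‖x‖) := by
        gcongr
        exact Real.le_rpow_one_div_mul_of_rpow_le (norm_nonneg _) (norm_nonneg _)
          (by positivity) (by linarith) hQs
    _ ≤ M ^ 2 * ((K * τ / t) ^ (1 / p) * ‖x‖) := by gcongr; nlinarith
    _ = (K * τ) ^ (1 / p) * M ^ 2 * t ^ (-(1 / p)) * ‖x‖ := by
        rw [Real.div_rpow (by positivity) ht.le, Real.rpow_neg ht.le]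
        ring

/-- observability plus an integrated observation bound yield the
polynomial decay rate `‖T(t)Q‖ ≤ (Kτ)^{1/p} M² t^{-1/p}`. -/
theorem stmt11 {X Y : Type*} [NormedAddCommGroup X] [NormedSpace ℂ X] [CompleteSpace X]
    [NormedAddCommGroup Y] [NormedSpace ℂ Y] [CompleteSpace Y]
    (T : ℝ → X →L[ℂ] X) (M : ℝ) (hM : 1 ≤ M)
    (hT0 : T 0 = 1)
    (hTadd : ∀ s t : ℝ, 0 ≤ s → 0 ≤ t → T (s + t) = (T s) ∘L (T t))
    (hTcont : ∀ x : X, ContinuousOn (fun t : ℝ => T t x) (Set.Ici (0 : ℝ)))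
    (hTbdd : ∀ t : ℝ, 0 ≤ t → ‖T t‖ ≤ M)
    (C : X →L[ℂ] Y) (Q : X →L[ℂ] X)
    (hQ : ∀ t : ℝ, 0 ≤ t → (T t) ∘L Q = Q ∘L (T t))
    (p : ℝ) (hp : 1 ≤ p)
    (K τ : ℝ) (hK : 0 < K) (hτ : 0 < τ)
    (hobs : ∀ x : X, ‖Q x‖ ^ p ≤ K * ∫ t in (0 : ℝ)..τ, ‖C (T t x)‖ ^ p)
    (hintC : ∀ x : X,
      ∫⁻ t in Set.Ioi (0 : ℝ), ENNReal.ofReal (‖C (T t x)‖ ^ p)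
        ≤ ENNReal.ofReal (‖x‖ ^ p)) :
    ∀ t : ℝ, 0 < t → ∀ x : X,
      ‖T t (Q x)‖ ≤ (K * τ) ^ (1 / p) * M ^ 2 * t ^ (-(1 / p)) * ‖x‖ :=
  stmt11_general T M hM hTadd hTbdd C Q hQ p hp K τ hK hτ hobs hintC
end

section
/- Let X be a complex Banach space, let (T(t))_{t≥0} be a strongly continuous semigroup on X that is bounded by a constant M ≥ 1, let Q be a bounded linear operator on X, let 1 < p < ∞ with Hölder conjugate q (so 1/p + 1/q = 1), and let K > 0 be such that ∫₀^∞ |x*(T(t)Qx)|^p dt ≤ K^p ‖x‖^p ‖x*‖^p for all x ∈ X and all bounded linear functionals x* on X. Then for every λ ∈ ℂ with Re λ > 0 and every x ∈ X the Bochner integral R(λ)x := ∫₀^∞ e^{−λt} T(t)x dt converges and ‖R(λ)(Qx)‖ ≤ K (q Re λ)^{−1/q} ‖x‖. -/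
/-!
The orbit integral converges absolutely because `‖T t‖ ≤ M` and `e^{-t Re λ}` is integrable.
For the estimate it suffices, by Hahn–Banach, to bound `|x*(R(λ)Qx)| ≤ ∫ e^{-t Re λ} |x*(T t Qx)| dt`
for every functional `x*`; Hölder's inequality splits this into `‖e^{-t Re λ}‖_q = (q Re λ)^{-1/q}`
times `‖x*(T(·)Qx)‖_p ≤ K ‖x‖ ‖x*‖`.
-/

open MeasureTheory Set

theorem Complex.norm_exp_neg_mul_ofReal (z : ℂ) (t : ℝ) :
    ‖Complex.exp (-(z * t))‖ = Real.exp (-(z.re * t)) := by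
  simp [Complex.norm_exp, Complex.mul_re]

theorem integrableOn_exp_neg_mul_smul_Ioi {E : Type*} [NormedAddCommGroup E] [NormedSpace ℂ E]
    {f : ℝ → E} (hf : AEStronglyMeasurable f (volume.restrict (Ioi 0))) {C : ℝ}
    (hfC : ∀ t > 0, ‖f t‖ ≤ C) {z : ℂ} (hz : 0 < z.re) :
    IntegrableOn (fun t : ℝ => Complex.exp (-(z * t)) • f t) (Ioi 0) := by
  refine Integrable.mono' ((exp_neg_integrableOn_Ioi 0 hz).const_mul C)
    ((Continuous.aestronglyMeasurable (by fun_prop)).smul hf) ?_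
  filter_upwards [self_mem_ae_restrict measurableSet_Ioi] with t ht
  rw [norm_smul, Complex.norm_exp_neg_mul_ofReal, neg_mul, mul_comm C]
  gcongr
  exact hfC t ht

theorem lintegral_ofReal_exp_neg_mul_Ioi {b : ℝ} (hb : 0 < b) :
    ∫⁻ t in Ioi 0, ENNReal.ofReal (Real.exp (-(b * t))) = ENNReal.ofReal b⁻¹ := by
  have h := integral_exp_mul_Ioi (neg_lt_zero.2 hb) 0
  simp only [neg_mul, mul_zero, Real.exp_zero, neg_div_neg_eq, one_div] at h
  rw [← h, ofReal_integral_eq_lintegral_ofReal]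
  · simpa only [neg_mul] using (exp_neg_integrableOn_Ioi 0 hb).integrable
  · exact ae_of_all _ fun t => (Real.exp_pos _).le

theorem lintegral_ofReal_exp_neg_mul_rpow_Ioi {a q : ℝ} (ha : 0 < a) (hq : 0 < q) :
    (∫⁻ t in Ioi 0, ENNReal.ofReal (Real.exp (-(a * t))) ^ q) ^ (1 / q)
      = ENNReal.ofReal ((q * a) ^ (-(1 / q))) := by
  have hqa : 0 < q * a := mul_pos hq ha
  simp_rw [ENNReal.ofReal_rpow_of_pos (Real.exp_pos _), ← Real.exp_mul,
    show ∀ t, -(a * t) * q = -(q * a * t) from fun t => by ring]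
  rw [lintegral_ofReal_exp_neg_mul_Ioi hqa, ENNReal.ofReal_rpow_of_pos (inv_pos.2 hqa),
    Real.inv_rpow hqa.le, ← Real.rpow_neg hqa.le]

theorem lintegral_ofReal_rpow_rpow_one_div_le {α : Type*} [MeasurableSpace α] {μ : Measure α}
    {g : α → ℝ} (hg0 : 0 ≤ g) {p C : ℝ} (hp : 0 < p) (hC : 0 ≤ C)
    (hgp : ∫⁻ t, ENNReal.ofReal (g t ^ p) ∂μ ≤ ENNReal.ofReal (C ^ p)) :
    (∫⁻ t, ENNReal.ofReal (g t) ^ p ∂μ) ^ (1 / p) ≤ ENNReal.ofReal C := by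
  simp_rw [ENNReal.ofReal_rpow_of_nonneg (hg0 _) hp.le]
  calc (∫⁻ t, ENNReal.ofReal (g t ^ p) ∂μ) ^ (1 / p)
      ≤ ENNReal.ofReal (C ^ p) ^ (1 / p) := by gcongr
    _ = ENNReal.ofReal C := by
      rw [ENNReal.ofReal_rpow_of_nonneg (by positivity) (by positivity),
        ← Real.rpow_mul hC, mul_one_div_cancel hp.ne', Real.rpow_one]

theorem integral_exp_neg_mul_mul_le {g : ℝ → ℝ} (hg : AEMeasurable g (volume.restrict (Ioi 0)))
    (hg0 : 0 ≤ g) {p q : ℝ} (hpq : p.HolderConjugate q) {a C : ℝ} (ha : 0 < a) (hC : 0 ≤ C)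
    (hgp : ∫⁻ t in Ioi 0, ENNReal.ofReal (g t ^ p) ≤ ENNReal.ofReal (C ^ p)) :
    ∫ t in Ioi 0, Real.exp (-(a * t)) * g t ≤ (q * a) ^ (-(1 / q)) * C := by
  have hholder : ∫⁻ t in Ioi 0, ENNReal.ofReal (Real.exp (-(a * t)) * g t)
      ≤ ENNReal.ofReal ((q * a) ^ (-(1 / q))) * ENNReal.ofReal C := by
    simp_rw [ENNReal.ofReal_mul (Real.exp_pos _).le]
    calc _ ≤ (∫⁻ t in Ioi 0, ENNReal.ofReal (Real.exp (-(a * t))) ^ q) ^ (1 / q)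
          * (∫⁻ t in Ioi 0, ENNReal.ofReal (g t) ^ p) ^ (1 / p) :=
          ENNReal.lintegral_mul_le_Lp_mul_Lq _ hpq.symm
            (by fun_prop) hg.ennreal_ofReal
      _ ≤ _ := by
          rw [lintegral_ofReal_exp_neg_mul_rpow_Ioi ha hpq.symm.pos]
          gcongr
          exact lintegral_ofReal_rpow_rpow_one_div_le hg0 hpq.pos hC hgp
  have hqa : 0 ≤ (q * a) ^ (-(1 / q)) := by have := hpq.symm.pos; positivity
  rw [integral_eq_lintegral_of_nonneg_ae
    (ae_of_all _ fun t => mul_nonneg (Real.exp_pos _).le (hg0 t)) (by fun_prop)]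
  rw [← ENNReal.ofReal_mul hqa] at hholder
  exact ENNReal.toReal_le_of_le_ofReal (mul_nonneg hqa hC) hholder

theorem stmt16_general {X : Type*} [NormedAddCommGroup X] [NormedSpace ℂ X] [CompleteSpace X]
    (T : ℝ → X →L[ℂ] X) (M : ℝ)
    (hTcont : ∀ x : X, ContinuousOn (fun t : ℝ => T t x) (Set.Ici (0 : ℝ)))
    (hTbdd : ∀ t : ℝ, 0 ≤ t → ‖T t‖ ≤ M)
    (Q : X →L[ℂ] X)
    (p q : ℝ) (hp : 1 < p) (hpq : 1 / p + 1 / q = 1)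
    (K : ℝ) (hK : 0 < K)
    (hint : ∀ (x : X) (f : X →L[ℂ] ℂ),
      ∫⁻ t in Set.Ioi (0 : ℝ), ENNReal.ofReal (‖f (T t (Q x))‖ ^ p)
        ≤ ENNReal.ofReal (K ^ p * ‖x‖ ^ p * ‖f‖ ^ p)) :
    ∀ lam : ℂ, 0 < lam.re →
      (∀ x : X,
        IntegrableOn (fun t : ℝ => Complex.exp (-(lam * t)) • T t x) (Set.Ioi (0 : ℝ))) ∧
      (∀ x : X,
        ‖∫ t in Set.Ioi (0 : ℝ), Complex.exp (-(lam * t)) • T t (Q x)‖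
          ≤ K * (q * lam.re) ^ (-(1 / q)) * ‖x‖) := by
  intro lam hlam
  have hpq' : p.HolderConjugate q :=
    Real.holderConjugate_iff.mpr ⟨hp, by simpa only [one_div] using hpq⟩
  have horbit (x : X) : AEStronglyMeasurable (fun t => T t x) (volume.restrict (Ioi 0)) :=
    ((hTcont x).mono Ioi_subset_Ici_self).aestronglyMeasurable measurableSet_Ioi
  have hR (x : X) : IntegrableOn (fun t : ℝ => Complex.exp (-(lam * t)) • T t x) (Ioi 0) :=
    integrableOn_exp_neg_mul_smul_Ioi (horbit x) (C := M * ‖x‖)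
      (fun t ht => (T t).le_of_opNorm_le (hTbdd t ht.le) x) hlam
  have hqa : 0 ≤ (q * lam.re) ^ (-(1 / q)) := by have := hpq'.symm.pos; positivity
  refine ⟨hR, fun x => NormedSpace.norm_le_dual_bound ℂ _ (by positivity) fun f => ?_⟩
  rw [← f.integral_comp_comm (hR (Q x))]
  calc ‖∫ t in Ioi (0 : ℝ), f (Complex.exp (-(lam * t)) • T t (Q x))‖
      ≤ ∫ t in Ioi 0, Real.exp (-(lam.re * t)) * ‖f (T t (Q x))‖ := by
        refine (norm_integral_le_integral_norm _).trans_eq (integral_congr_ae (ae_of_all _ ?_))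
        intro t
        simp only [map_smul, norm_smul, Complex.norm_exp_neg_mul_ofReal]
    _ ≤ (q * lam.re) ^ (-(1 / q)) * (K * ‖x‖ * ‖f‖) := by
        refine integral_exp_neg_mul_mul_le (f.continuous.comp_aestronglyMeasurable
          (horbit (Q x))).norm.aemeasurable (fun t => norm_nonneg _) hpq' hlam (by positivity) ?_
        rw [Real.mul_rpow (by positivity) (norm_nonneg _), Real.mul_rpow hK.le (norm_nonneg _)]
        exact hint x f
    _ = K * (q * lam.re) ^ (-(1 / q)) * ‖x‖ * ‖f‖ := by ring

/-- Banach-space resolvent estimate from a weak `L^p` condition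
against bounded linear functionals. -/
theorem stmt16 {X : Type*} [NormedAddCommGroup X] [NormedSpace ℂ X] [CompleteSpace X]
    (T : ℝ → X →L[ℂ] X) (M : ℝ) (hM : 1 ≤ M)
    (hT0 : T 0 = 1)
    (hTadd : ∀ s t : ℝ, 0 ≤ s → 0 ≤ t → T (s + t) = (T s) ∘L (T t))
    (hTcont : ∀ x : X, ContinuousOn (fun t : ℝ => T t x) (Set.Ici (0 : ℝ)))
    (hTbdd : ∀ t : ℝ, 0 ≤ t → ‖T t‖ ≤ M)
    (Q : X →L[ℂ] X)
    (p q : ℝ) (hp : 1 < p) (hpq : 1 / p + 1 / q = 1)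
    (K : ℝ) (hK : 0 < K)
    (hint : ∀ (x : X) (f : X →L[ℂ] ℂ),
      ∫⁻ t in Set.Ioi (0 : ℝ), ENNReal.ofReal (‖f (T t (Q x))‖ ^ p)
        ≤ ENNReal.ofReal (K ^ p * ‖x‖ ^ p * ‖f‖ ^ p)) :
    ∀ lam : ℂ, 0 < lam.re →
      (∀ x : X,
        IntegrableOn (fun t : ℝ => Complex.exp (-(lam * t)) • T t x) (Set.Ioi (0 : ℝ))) ∧
      (∀ x : X,
        ‖∫ t in Set.Ioi (0 : ℝ), Complex.exp (-(lam * t)) • T t (Q x)‖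
          ≤ K * (q * lam.re) ^ (-(1 / q)) * ‖x‖) :=
  stmt16_general T M hTcont hTbdd Q p q hp hpq K hK hint
end
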